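/- arXiv:math/0104248 — 4 statements merged into one kernel-verified Lean document; each statement's English description precedes it below -/
import Mathlib

section
/- For any nonzero polynomials q₁(x) ∈ ℂ[x] and q₂(y) ∈ ℂ[y], the right ideal q₁(x)A + q₂(y)A of the Weyl algebra A equals all of A; in particular there exist a, b ∈ A with 1 = q₁(x)a + q₂(y)b. -/
/-!
Let `I = q₁(x)A + q₂(y)A`. Reducing with the leading terms of `q₁(x)` and `q₂(y)` (pushing `x^i`
past `q₂(y)` only costs terms of lower `y`-degree) shows that the monomials `x^i y^j` with
`i ≤ deg q₁`, `j ≤ deg q₂` span `A` modulo `I`, so `A ⧸ I` is finite-dimensional. As `I` is a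
right ideal, right multiplication by `x` and by `y` descends to `A ⧸ I`, and the two operators
have commutator `1`. Its trace is `dim (A ⧸ I)` and also `0`, so `A ⧸ I = 0`, i.e. `1 ∈ I`.
-/

noncomputable section

/-- Defining relation of the first Weyl algebra: `xy - yx = 1`. -/
inductive WeylRel : FreeAlgebra ℂ (Fin 2) → FreeAlgebra ℂ (Fin 2) → Prop
  | rel : WeylRel (FreeAlgebra.ι ℂ 0 * FreeAlgebra.ι ℂ 1 - FreeAlgebra.ι ℂ 1 * FreeAlgebra.ι ℂ 0) 1

/-- The first Weyl algebra `A = ℂ⟨x,y⟩/([x,y] - 1)`. -/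
abbrev Weyl : Type := RingQuot WeylRel

/-- The generator `x` of the Weyl algebra. -/
def wx : Weyl := RingQuot.mkAlgHom ℂ WeylRel (FreeAlgebra.ι ℂ 0)

/-- The generator `y` of the Weyl algebra. -/
def wy : Weyl := RingQuot.mkAlgHom ℂ WeylRel (FreeAlgebra.ι ℂ 1)

/-- The weight filtration of weight `w = (w₁, w₂)` on the Weyl algebra:
`A_k(w)` is the span of the monomials `x^α y^β` with `w₁ α + w₂ β ≤ k`. -/
def weylF (w₁ w₂ : ℕ) (k : ℤ) : Submodule ℂ Weyl :=
  Submodule.span ℂ {a : Weyl | ∃ α β : ℕ, (w₁ * α + w₂ * β : ℤ) ≤ k ∧ a = wx ^ α * wy ^ β}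

open Polynomial

section Commutator

variable {K V : Type*} [Field K] [CharZero K] [AddCommGroup V] [Module K V]

theorem LinearMap.subsingleton_of_mul_sub_mul_eq_one [FiniteDimensional K V]
    {f g : Module.End K V} (h : f * g - g * f = 1) : Subsingleton V := by
  have htrace := congrArg (LinearMap.trace K V) h
  rw [map_sub, LinearMap.trace_mul_comm, sub_self, LinearMap.trace_one] at htrace
  exact Module.finrank_zero_iff.mp (Nat.cast_eq_zero.mp htrace.symm)

variable {A : Type*} [Ring A] [Algebra K A]

theorem Submodule.eq_top_of_mul_sub_mul_eq_one {x y : A} (hxy : x * y - y * x = 1)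
    {I : Submodule K A} [FiniteDimensional K (A ⧸ I)]
    (hx : I.map (LinearMap.mulRight K x) ≤ I) (hy : I.map (LinearMap.mulRight K y) ≤ I) :
    I = ⊤ := by
  let Rx := I.mapQ I (LinearMap.mulRight K x) (Submodule.map_le_iff_le_comap.mp hx)
  let Ry := I.mapQ I (LinearMap.mulRight K y) (Submodule.map_le_iff_le_comap.mp hy)
  have hcomm : Ry * Rx - Rx * Ry = 1 := by
    refine LinearMap.ext fun q => Submodule.Quotient.induction_on _ q fun z => ?_
    change Submodule.Quotient.mk (z * x * y) - Submodule.Quotient.mk (z * y * x) =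
      (Submodule.Quotient.mk z : A ⧸ I)
    rw [← Submodule.Quotient.mk_sub, mul_assoc, mul_assoc, ← mul_sub, hxy, mul_one]
  exact Submodule.Quotient.subsingleton_iff.mp
    (LinearMap.subsingleton_of_mul_sub_mul_eq_one hcomm)

end Commutator

section Algebra

variable {R A : Type*} [CommRing R] [Ring A] [Algebra R A]

theorem Submodule.eq_top_of_one_mem_of_map_mulRight_le {s : Set A}
    (hs : Algebra.adjoin R s = ⊤) {S : Submodule R A} (h1 : 1 ∈ S)
    (hS : ∀ a ∈ s, S.map (LinearMap.mulRight R a) ≤ S) : S = ⊤ := by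
  have hA : ∀ a, S.map (LinearMap.mulRight R a) ≤ S := by
    intro a
    induction (hs ▸ Algebra.mem_top : a ∈ Algebra.adjoin R s) using Algebra.adjoin_induction with
    | mem a ha => exact hS a ha
    | algebraMap r =>
      rintro _ ⟨z, hz, rfl⟩
      rw [LinearMap.mulRight_apply, ← Algebra.commutes, ← Algebra.smul_def]
      exact S.smul_mem r hz
    | add a b _ _ ha hb =>
      rintro _ ⟨z, hz, rfl⟩
      rw [LinearMap.mulRight_apply, mul_add]
      exact add_mem (ha (Submodule.mem_map_of_mem hz)) (hb (Submodule.mem_map_of_mem hz))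
    | mul a b _ _ ha hb =>
      rw [LinearMap.mulRight_mul, Submodule.map_comp]
      exact (Submodule.map_mono ha).trans hb
  refine eq_top_iff'.mpr fun a => ?_
  simpa using hA a (Submodule.mem_map_of_mem h1)

def pairRightIdeal (u v : A) : Submodule R A where
  carrier := {z | ∃ a b : A, z = u * a + v * b}
  add_mem' := by
    rintro _ _ ⟨a, b, rfl⟩ ⟨c, d, rfl⟩
    exact ⟨a + c, b + d, by rw [mul_add, mul_add]; abel⟩
  zero_mem' := ⟨0, 0, by simp⟩
  smul_mem' := by
    rintro c _ ⟨a, b, rfl⟩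
    exact ⟨c • a, c • b, by rw [smul_add, mul_smul_comm, mul_smul_comm]⟩

theorem left_mul_mem_pairRightIdeal (u v a : A) : u * a ∈ pairRightIdeal (R := R) u v :=
  ⟨a, 0, by simp⟩

theorem right_mul_mem_pairRightIdeal (u v b : A) : v * b ∈ pairRightIdeal (R := R) u v :=
  ⟨0, b, by simp⟩

theorem pairRightIdeal_map_mulRight_le (u v w : A) :
    (pairRightIdeal u v).map (LinearMap.mulRight R w) ≤ pairRightIdeal u v := by
  rintro _ ⟨_, ⟨a, b, rfl⟩, rfl⟩
  exact ⟨a * w, b * w, by rw [LinearMap.mulRight_apply, add_mul, mul_assoc, mul_assoc]⟩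

theorem mul_aeval_eq_aeval_mul_add_aeval_derivative {x y : A} (hxy : x * y - y * x = 1)
    (p : R[X]) : x * aeval y p = aeval y p * x + aeval y (derivative p) := by
  induction p using Polynomial.induction_on with
  | C a => simp [Algebra.commutes]
  | add p q hp hq => simp only [map_add, mul_add, add_mul, hp, hq]; abel
  | monomial n a ih =>
    have hxy' : x * y = y * x + 1 := by rw [← hxy]; abel
    rw [pow_succ, ← mul_assoc]
    generalize C a * X ^ n = p at ih ⊢
    simp only [map_mul, aeval_X, derivative_mul, derivative_X, mul_one, map_add]
    rw [← mul_assoc, ih, add_mul, mul_assoc _ x, hxy']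
    noncomm_ring

end Algebra

theorem Polynomial.pow_natDegree_eq_leadingCoeff_inv_smul {K A : Type*} [Field K] [Ring A]
    [Algebra K A] {q : K[X]} (hq : q ≠ 0) (u : A) :
    u ^ q.natDegree = q.leadingCoeff⁻¹ • (aeval u q - aeval u q.eraseLead) := by
  have hsplit := congrArg (aeval u) (eraseLead_add_C_mul_X_pow q)
  rw [map_add, map_mul, aeval_C, map_pow, aeval_X, ← Algebra.smul_def] at hsplit
  rw [← hsplit, add_sub_cancel_left, smul_smul, inv_mul_cancel₀ (leadingCoeff_ne_zero.mpr hq),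
    one_smul]

theorem wx_mul_wy_sub_wy_mul_wx : wx * wy - wy * wx = 1 := by
  have h := RingQuot.mkAlgHom_rel ℂ WeylRel.rel
  rwa [map_sub, map_mul, map_mul, map_one] at h

theorem weyl_adjoin_eq_top : Algebra.adjoin ℂ ({wx, wy} : Set Weyl) = ⊤ := by
  have hrange : ({wx, wy} : Set Weyl) =
      RingQuot.mkAlgHom ℂ WeylRel '' Set.range (FreeAlgebra.ι ℂ) := by
    ext z; simp [wx, wy, Fin.exists_fin_two, eq_comm]
  rw [hrange, Algebra.adjoin_image, FreeAlgebra.adjoin_range_ι, Algebra.map_top,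
    AlgHom.range_eq_top]
  exact RingQuot.mkAlgHom_surjective ℂ WeylRel

def weylBox (a b : ℕ) : Submodule ℂ Weyl :=
  Submodule.span ℂ (Set.image2 (fun i j => wx ^ i * wy ^ j) (Set.Iic a) (Set.Iic b))

theorem mem_weylBox {a b i j : ℕ} (hi : i ≤ a) (hj : j ≤ b) : wx ^ i * wy ^ j ∈ weylBox a b :=
  Submodule.subset_span (Set.mem_image2_of_mem hi hj)

theorem weylBox_mono {a a' b b' : ℕ} (ha : a ≤ a') (hb : b ≤ b') : weylBox a b ≤ weylBox a' b' :=
  Submodule.span_mono (Set.image2_subset (Set.Iic_subset_Iic.mpr ha) (Set.Iic_subset_Iic.mpr hb))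

theorem weylBox_fg (a b : ℕ) : (weylBox a b).FG :=
  Submodule.fg_span ((Set.finite_Iic a).image2 _ (Set.finite_Iic b))

theorem wx_pow_mul_aeval_wy_mem_weylBox {a b i : ℕ} {q : ℂ[X]} (hi : i ≤ a)
    (hq : q.natDegree ≤ b) : wx ^ i * aeval wy q ∈ weylBox a b := by
  rw [aeval_eq_sum_range, Finset.mul_sum]
  refine Submodule.sum_mem _ fun j hj => ?_
  rw [mul_smul_comm]
  exact Submodule.smul_mem _ _ (mem_weylBox hi (by rw [Finset.mem_range] at hj; omega))

theorem aeval_wx_mul_wy_pow_mem_weylBox {a b j : ℕ} {p : ℂ[X]} (hp : p.natDegree ≤ a)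
    (hj : j ≤ b) : aeval wx p * wy ^ j ∈ weylBox a b := by
  rw [aeval_eq_sum_range, Finset.sum_mul]
  refine Submodule.sum_mem _ fun i hi => ?_
  rw [smul_mul_assoc]
  exact Submodule.smul_mem _ _ (mem_weylBox (by rw [Finset.mem_range] at hi; omega) hj)

theorem weylBox_map_mulRight_wx_le (a b : ℕ) :
    (weylBox a b).map (LinearMap.mulRight ℂ wx) ≤ weylBox (a + 1) b := by
  refine (Submodule.map_span_le _ _ _).mpr (Set.forall_mem_image2.mpr fun i hi j hj => ?_)
  have hcomm := mul_aeval_eq_aeval_mul_add_aeval_derivative wx_mul_wy_sub_wy_mul_wx ((X : ℂ[X]) ^ j)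
  rw [aeval_X_pow, eq_comm, ← eq_sub_iff_add_eq] at hcomm
  rw [LinearMap.mulRight_apply, mul_assoc, hcomm, mul_sub, ← mul_assoc, ← pow_succ]
  refine sub_mem (mem_weylBox (Nat.succ_le_succ hi) hj) (wx_pow_mul_aeval_wy_mem_weylBox
    (Nat.le_succ_of_le hi) ((natDegree_derivative_le _).trans ?_))
  rw [natDegree_X_pow]
  exact (Nat.sub_le j 1).trans hj

theorem weylBox_map_mulRight_wy_le (a b : ℕ) :
    (weylBox a b).map (LinearMap.mulRight ℂ wy) ≤ weylBox a (b + 1) := by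
  refine (Submodule.map_span_le _ _ _).mpr (Set.forall_mem_image2.mpr fun i hi j hj => ?_)
  rw [LinearMap.mulRight_apply, mul_assoc, ← pow_succ]
  exact mem_weylBox hi (Nat.succ_le_succ hj)

section Reduction

variable {I : Submodule ℂ Weyl}

theorem sup_weylBox_map_mulRight_wx_le (hI : I.map (LinearMap.mulRight ℂ wx) ≤ I) (a b : ℕ) :
    (I ⊔ weylBox a b).map (LinearMap.mulRight ℂ wx) ≤ I ⊔ weylBox (a + 1) b :=
  (Submodule.map_sup _ _ _).trans_le (sup_le_sup hI (weylBox_map_mulRight_wx_le a b))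

theorem sup_weylBox_map_mulRight_wy_le (hI : I.map (LinearMap.mulRight ℂ wy) ≤ I) (a b : ℕ) :
    (I ⊔ weylBox a b).map (LinearMap.mulRight ℂ wy) ≤ I ⊔ weylBox a (b + 1) :=
  (Submodule.map_sup _ _ _).trans_le (sup_le_sup hI (weylBox_map_mulRight_wy_le a b))

/-- `x^i p(y) = p(y) x^i + r` with `r` of `y`-degree `< deg p`. -/
theorem wx_pow_mul_aeval_wy_mem_sup_weylBox (hI : I.map (LinearMap.mulRight ℂ wx) ≤ I)
    {p : ℂ[X]} (hp : aeval wy p ∈ I) (i : ℕ) :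
    wx ^ i * aeval wy p ∈ I ⊔ weylBox i (p.natDegree - 1) := by
  induction i with
  | zero => simpa using Submodule.mem_sup_left hp
  | succ i ih =>
    have hcomm : wx ^ (i + 1) * aeval wy p =
        wx ^ i * aeval wy p * wx + wx ^ i * aeval wy (derivative p) := by
      rw [pow_succ, mul_assoc, mul_aeval_eq_aeval_mul_add_aeval_derivative
        wx_mul_wy_sub_wy_mul_wx, mul_add, mul_assoc]
    rw [hcomm]
    exact add_mem (sup_weylBox_map_mulRight_wx_le hI _ _ (Submodule.mem_map_of_mem ih))
      (Submodule.mem_sup_right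
        (wx_pow_mul_aeval_wy_mem_weylBox (Nat.le_succ i) (natDegree_derivative_le p)))

theorem weylBox_succ_left_le {q : ℂ[X]} (hq : q ≠ 0) (hI : ∀ z, aeval wx q * z ∈ I) (b : ℕ) :
    weylBox (q.natDegree + 1) b ≤ I ⊔ weylBox q.natDegree b := by
  refine Submodule.span_le.mpr (Set.forall_mem_image2.mpr fun i hi j hj => ?_)
  rcases (Set.mem_Iic.mp hi).lt_or_eq with hi | rfl
  · exact Submodule.mem_sup_right (mem_weylBox (Nat.lt_succ_iff.mp hi) hj)
  rw [← natDegree_mul_X hq, pow_natDegree_eq_leadingCoeff_inv_smul (mul_ne_zero hq X_ne_zero),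
    smul_mul_assoc, sub_mul]
  refine Submodule.smul_mem _ _ (sub_mem (Submodule.mem_sup_left ?_) (Submodule.mem_sup_right ?_))
  · rw [map_mul, aeval_X, mul_assoc]
    exact hI _
  · refine aeval_wx_mul_wy_pow_mem_weylBox ((eraseLead_natDegree_le _).trans ?_) hj
    rw [natDegree_mul_X hq, Nat.add_sub_cancel]

theorem weylBox_succ_right_le (hIx : I.map (LinearMap.mulRight ℂ wx) ≤ I) {q : ℂ[X]}
    (hq : q ≠ 0) (hI : ∀ z, aeval wy q * z ∈ I) (a : ℕ) :
    weylBox a (q.natDegree + 1) ≤ I ⊔ weylBox a q.natDegree := by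
  refine Submodule.span_le.mpr (Set.forall_mem_image2.mpr fun i hi j hj => ?_)
  rcases (Set.mem_Iic.mp hj).lt_or_eq with hj | rfl
  · exact Submodule.mem_sup_right (mem_weylBox hi (Nat.lt_succ_iff.mp hj))
  have hqX : (q * X).natDegree - 1 = q.natDegree := by
    rw [natDegree_mul_X hq, Nat.add_sub_cancel]
  rw [← natDegree_mul_X hq, pow_natDegree_eq_leadingCoeff_inv_smul (mul_ne_zero hq X_ne_zero),
    mul_smul_comm, mul_sub]
  refine Submodule.smul_mem _ _ (sub_mem ?_ (Submodule.mem_sup_right ?_))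
  · have hqX_mem : aeval wy (q * X) ∈ I := by
      rw [map_mul, aeval_X]
      exact hI _
    have := wx_pow_mul_aeval_wy_mem_sup_weylBox hIx hqX_mem i
    rw [hqX] at this
    exact sup_le_sup_left (weylBox_mono hi le_rfl) _ this
  · exact wx_pow_mul_aeval_wy_mem_weylBox hi ((eraseLead_natDegree_le _).trans hqX.le)

end Reduction

theorem pairRightIdeal_sup_weylBox_eq_top {q₁ q₂ : ℂ[X]} (h₁ : q₁ ≠ 0) (h₂ : q₂ ≠ 0) :
    pairRightIdeal (aeval wx q₁) (aeval wy q₂) ⊔ weylBox q₁.natDegree q₂.natDegree = ⊤ := by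
  have hI := pairRightIdeal_map_mulRight_le (R := ℂ) (aeval wx q₁) (aeval wy q₂)
  refine Submodule.eq_top_of_one_mem_of_map_mulRight_le weyl_adjoin_eq_top
    (Submodule.mem_sup_right (by simpa using mem_weylBox (Nat.zero_le _) (Nat.zero_le _))) ?_
  rintro _ (rfl | rfl)
  · exact (sup_weylBox_map_mulRight_wx_le (hI _) _ _).trans
      (sup_le le_sup_left (weylBox_succ_left_le h₁ (left_mul_mem_pairRightIdeal _ _) _))
  · exact (sup_weylBox_map_mulRight_wy_le (hI _) _ _).trans
      (sup_le le_sup_left (weylBox_succ_right_le (hI _) h₂ (right_mul_mem_pairRightIdeal _ _) _))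

/-- For nonzero `q₁(x) ∈ ℂ[x]` and `q₂(y) ∈ ℂ[y]`, the right ideal `q₁(x)A + q₂(y)A` is all
of the Weyl algebra `A`: there exist `a, b ∈ A` with `1 = q₁(x)a + q₂(y)b`. -/
theorem weyl_right_ideal_eq_top (q₁ q₂ : Polynomial ℂ) (h₁ : q₁ ≠ 0) (h₂ : q₂ ≠ 0) :
    ∃ a b : Weyl, (1 : Weyl) = Polynomial.aeval wx q₁ * a + Polynomial.aeval wy q₂ * b := by
  set I := pairRightIdeal (R := ℂ) (aeval wx q₁) (aeval wy q₂)
  have hspan : Submodule.map I.mkQ (weylBox q₁.natDegree q₂.natDegree) = ⊤ :=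
    (Submodule.map_mkQ_eq_top _ _).mpr (pairRightIdeal_sup_weylBox_eq_top h₁ h₂)
  have : FiniteDimensional ℂ (Weyl ⧸ I) :=
    ⟨hspan ▸ (weylBox_fg _ _).map _⟩
  have hI : I = ⊤ := Submodule.eq_top_of_mul_sub_mul_eq_one wx_mul_wy_sub_wy_mul_wx
    (pairRightIdeal_map_mulRight_le _ _ _) (pairRightIdeal_map_mulRight_le _ _ _)
  exact (hI ▸ Submodule.mem_top : (1 : Weyl) ∈ I)
end
end

section
/- In the homogenized Weyl algebra 𝐀(w), every element of the form q₁(X,Z) obtained by homogenizing a nonzero polynomial q₁(x) ∈ ℂ[x] is a locally ad-nilpotent element, and consequently the multiplicative set U₁ of all such homogenized polynomials satisfies the (left and right) Ore condition in 𝐀(w). -/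
noncomputable section

/-- Defining relations of the homogenized Weyl algebra of weight `w = (w₁, w₂)`:
`XZ = ZX`, `YZ = ZY`, `XY - YX = Z^(w₁+w₂)`. -/
inductive HRel (w₁ w₂ : ℕ) : FreeAlgebra ℂ (Fin 3) → FreeAlgebra ℂ (Fin 3) → Prop
  | xz : HRel w₁ w₂ (FreeAlgebra.ι ℂ 0 * FreeAlgebra.ι ℂ 2) (FreeAlgebra.ι ℂ 2 * FreeAlgebra.ι ℂ 0)
  | yz : HRel w₁ w₂ (FreeAlgebra.ι ℂ 1 * FreeAlgebra.ι ℂ 2) (FreeAlgebra.ι ℂ 2 * FreeAlgebra.ι ℂ 1)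
  | xy : HRel w₁ w₂ (FreeAlgebra.ι ℂ 0 * FreeAlgebra.ι ℂ 1 - FreeAlgebra.ι ℂ 1 * FreeAlgebra.ι ℂ 0)
      (FreeAlgebra.ι ℂ 2 ^ (w₁ + w₂))

/-- The homogenized Weyl algebra `𝐀(w)` of weight `w = (w₁, w₂)`. -/
abbrev HWeyl (w₁ w₂ : ℕ) : Type := RingQuot (HRel w₁ w₂)

/-- The degree-`w₁` generator `X` of `𝐀(w)`. -/
def HX (w₁ w₂ : ℕ) : HWeyl w₁ w₂ := RingQuot.mkAlgHom ℂ (HRel w₁ w₂) (FreeAlgebra.ι ℂ 0)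

/-- The degree-`w₂` generator `Y` of `𝐀(w)`. -/
def HY (w₁ w₂ : ℕ) : HWeyl w₁ w₂ := RingQuot.mkAlgHom ℂ (HRel w₁ w₂) (FreeAlgebra.ι ℂ 1)

/-- The degree-`1` generator `Z` of `𝐀(w)`. -/
def HZ (w₁ w₂ : ℕ) : HWeyl w₁ w₂ := RingQuot.mkAlgHom ℂ (HRel w₁ w₂) (FreeAlgebra.ι ℂ 2)

/-- The degree-`k` graded component of `𝐀(w)`: the span of the monomials `X^a Y^b Z^c`
with `w₁ a + w₂ b + c = k`. -/
def HComp (w₁ w₂ : ℕ) (k : ℕ) : Submodule ℂ (HWeyl w₁ w₂) :=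
  Submodule.span ℂ {m : HWeyl w₁ w₂ | ∃ a b c : ℕ, w₁ * a + w₂ * b + c = k ∧
    m = HX w₁ w₂ ^ a * HY w₁ w₂ ^ b * HZ w₁ w₂ ^ c}

/-- The homogenization `𝐪(X,Z) = Σ aᵢ X^i Z^{d - w₁ i}` (with `d = w₁ · deg q`) in `𝐀(w)`
of a polynomial `q(x) = Σ aᵢ x^i`. -/
def homogX (w₁ w₂ : ℕ) (q : Polynomial ℂ) : HWeyl w₁ w₂ :=
  ∑ i ∈ Finset.range (q.natDegree + 1),
    q.coeff i • (HX w₁ w₂ ^ i * HZ w₁ w₂ ^ (w₁ * (q.natDegree - i)))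

namespace HWA

variable {w₁ w₂ : ℕ}

lemma z_comm (a : HWeyl w₁ w₂) : Commute (HZ w₁ w₂) a := by
  obtain ⟨f, rfl⟩ := RingQuot.mkAlgHom_surjective ℂ (HRel w₁ w₂) a
  induction f with
  | grade0 r =>
      rw [AlgHom.commutes]
      exact (Algebra.commutes r (HZ w₁ w₂)).symm
  | grade1 i =>
      fin_cases i
      · have := RingQuot.mkAlgHom_rel ℂ (HRel.xz (w₁ := w₁) (w₂ := w₂))
        simp only [map_mul] at this
        exact this.symm
      · have := RingQuot.mkAlgHom_rel ℂ (HRel.yz (w₁ := w₁) (w₂ := w₂))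
        simp only [map_mul] at this
        exact this.symm
      · exact Commute.refl _
  | mul a b ha hb => simp only [map_mul]; exact ha.mul_right hb
  | add a b ha hb => simp only [map_add]; exact ha.add_right hb


lemma xy_sub : HX w₁ w₂ * HY w₁ w₂ - HY w₁ w₂ * HX w₁ w₂ = HZ w₁ w₂ ^ (w₁ + w₂) := by
  have := RingQuot.mkAlgHom_rel ℂ (HRel.xy (w₁ := w₁) (w₂ := w₂))
  simp only [map_sub, map_mul, map_pow] at this
  exact this

lemma commute_X_homog (q : Polynomial ℂ) : Commute (HX w₁ w₂) (homogX w₁ w₂ q) := by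
  refine Commute.sum_right _ _ _ fun i hi => (Commute.smul_right ?_ _)
  exact ((Commute.refl _).pow_right _).mul_right ((z_comm (HX w₁ w₂)).symm.pow_right _)

lemma commute_Z_homog (q : Polynomial ℂ) : Commute (HZ w₁ w₂) (homogX w₁ w₂ q) :=
  z_comm _

lemma commute_homog_T (q : Polynomial ℂ) (i : ℕ) :
    Commute (homogX w₁ w₂ q) (HX w₁ w₂ ^ i * HY w₁ w₂ - HY w₁ w₂ * HX w₁ w₂ ^ i) := by
  induction i with
  | zero => simpa using Commute.zero_right _
  | succ i ih =>
      have key : HX w₁ w₂ ^ (i+1) * HY w₁ w₂ - HY w₁ w₂ * HX w₁ w₂ ^ (i+1)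
          = (HX w₁ w₂ * HY w₁ w₂ - HY w₁ w₂ * HX w₁ w₂) * HX w₁ w₂ ^ i
            + HX w₁ w₂ * (HX w₁ w₂ ^ i * HY w₁ w₂ - HY w₁ w₂ * HX w₁ w₂ ^ i) := by
        rw [pow_succ', sub_mul, mul_sub, mul_assoc (HX w₁ w₂) (HY w₁ w₂),
          sub_add_sub_cancel', mul_assoc, mul_assoc]
      rw [key, xy_sub]
      exact Commute.add_right
        (Commute.mul_right ((commute_Z_homog q).symm.pow_right _)
          ((commute_X_homog q).symm.pow_right _))
        (Commute.mul_right (commute_X_homog q).symm ih)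

/-- inner derivation -/
def adH (u : HWeyl w₁ w₂) : HWeyl w₁ w₂ → HWeyl w₁ w₂ := fun b => u * b - b * u

lemma adH_eq_zero_of_commute {u a : HWeyl w₁ w₂} (h : Commute u a) : adH u a = 0 :=
  sub_eq_zero_of_eq h

lemma ad_ad_Y (q : Polynomial ℂ) :
    adH (homogX w₁ w₂ q) (adH (homogX w₁ w₂ q) (HY w₁ w₂)) = 0 := by
  apply adH_eq_zero_of_commute
  have hDY : adH (homogX w₁ w₂ q) (HY w₁ w₂)
      = ∑ i ∈ Finset.range (q.natDegree + 1), q.coeff i •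
        ((HX w₁ w₂ ^ i * HY w₁ w₂ - HY w₁ w₂ * HX w₁ w₂ ^ i)
          * HZ w₁ w₂ ^ (w₁ * (q.natDegree - i))) := by
    unfold adH homogX
    rw [Finset.sum_mul, Finset.mul_sum, ← Finset.sum_sub_distrib]
    refine Finset.sum_congr rfl fun i hi => ?_
    have h : (HX w₁ w₂ ^ i * HY w₁ w₂ - HY w₁ w₂ * HX w₁ w₂ ^ i)
        * HZ w₁ w₂ ^ (w₁ * (q.natDegree - i))
        = HX w₁ w₂ ^ i * HZ w₁ w₂ ^ (w₁ * (q.natDegree - i)) * HY w₁ w₂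
          - HY w₁ w₂ * (HX w₁ w₂ ^ i * HZ w₁ w₂ ^ (w₁ * (q.natDegree - i))) := by
      rw [sub_mul, mul_assoc, mul_assoc, ← ((z_comm (HY w₁ w₂)).pow_left _).eq,
        ← mul_assoc, ← mul_assoc]
    rw [h, smul_sub, smul_mul_assoc, mul_smul_comm]
  rw [hDY]
  refine Commute.sum_right _ _ _ fun i hi => (Commute.smul_right ?_ _)
  exact Commute.mul_right (commute_homog_T q i) ((z_comm _).symm.pow_right _)


lemma adH_zero (u : HWeyl w₁ w₂) : adH u 0 = 0 := by simp [adH]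

lemma adH_add (u a b : HWeyl w₁ w₂) : adH u (a + b) = adH u a + adH u b := by
  unfold adH; noncomm_ring

lemma adH_mul (u a b : HWeyl w₁ w₂) :
    adH u (a * b) = adH u a * b + a * adH u b := by
  unfold adH
  rw [sub_mul, mul_sub, ← mul_assoc a u b, sub_add_sub_cancel, ← mul_assoc u a b,
    mul_assoc a b u]

lemma iter_adH_zero (u : HWeyl w₁ w₂) (n : ℕ) : (adH u)^[n] 0 = 0 :=
  Function.iterate_fixed (adH_zero u) n

lemma iter_adH_add (u : HWeyl w₁ w₂) (n : ℕ) (a b : HWeyl w₁ w₂) :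
    (adH u)^[n] (a + b) = (adH u)^[n] a + (adH u)^[n] b := by
  induction n generalizing a b with
  | zero => simp
  | succ n ih => simp only [Function.iterate_succ_apply, adH_add, ih]

lemma iter_adH_le (u : HWeyl w₁ w₂) {m n : ℕ} (h : m ≤ n) {a : HWeyl w₁ w₂}
    (ha : (adH u)^[m] a = 0) : (adH u)^[n] a = 0 := by
  obtain ⟨k, rfl⟩ := Nat.exists_eq_add_of_le h
  rw [add_comm, Function.iterate_add_apply, ha, iter_adH_zero]

lemma iter_adH_mul (u : HWeyl w₁ w₂) :
    ∀ s m n a b, m + n ≤ s → (adH u)^[m] a = 0 → (adH u)^[n] b = 0 →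
      (adH u)^[m + n] (a * b) = 0 := by
  intro s
  induction s with
  | zero =>
      intro m n a b hle ha hb
      obtain rfl : m = 0 := by omega
      obtain rfl : n = 0 := by omega
      simp only [Function.iterate_zero_apply] at ha hb ⊢
      rw [ha, zero_mul]
      exact iter_adH_zero u _
  | succ s ih =>
      intro m n a b hle ha hb
      match m, n with
      | 0, n =>
          simp only [Function.iterate_zero_apply] at ha
          rw [ha, zero_mul, zero_add, iter_adH_zero]
      | m, 0 =>
          simp only [Function.iterate_zero_apply] at hb
          rw [hb, mul_zero, iter_adH_zero]
      | m'+1, n'+1 =>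
          have h1 : (adH u)^[m' + 1 + (n' + 1)] (a * b)
              = (adH u)^[m' + (n' + 1)] (adH u a * b)
                + (adH u)^[m' + 1 + n'] (a * adH u b) := by
            rw [show m' + 1 + (n' + 1) = (m' + (n' + 1)) + 1 by omega,
              Function.iterate_succ_apply, adH_mul, iter_adH_add]
            congr 1
            rw [show m' + (n' + 1) = m' + 1 + n' by omega]
          rw [h1, ih m' (n' + 1) (adH u a) b (by omega)
              (by rwa [← Function.iterate_succ_apply]) hb,
            ih (m' + 1) n' a (adH u b) (by omega) ha
              (by rwa [← Function.iterate_succ_apply]), add_zero]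

lemma locally_nilpotent (q : Polynomial ℂ) (a : HWeyl w₁ w₂) :
    ∃ N : ℕ, (adH (homogX w₁ w₂ q))^[N] a = 0 := by
  obtain ⟨f, rfl⟩ := RingQuot.mkAlgHom_surjective ℂ (HRel w₁ w₂) a
  induction f with
  | grade0 r =>
      refine ⟨1, ?_⟩
      rw [Function.iterate_one, AlgHom.commutes]
      exact adH_eq_zero_of_commute (Algebra.commutes r _).symm
  | grade1 i =>
      fin_cases i
      · refine ⟨1, ?_⟩
        rw [Function.iterate_one]
        exact adH_eq_zero_of_commute (commute_X_homog q).symm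
      · exact ⟨2, ad_ad_Y q⟩
      · refine ⟨1, ?_⟩
        rw [Function.iterate_one]
        exact adH_eq_zero_of_commute (commute_Z_homog q).symm
  | mul a b ha hb =>
      obtain ⟨m, hm⟩ := ha
      obtain ⟨n, hn⟩ := hb
      refine ⟨m + n, ?_⟩
      rw [map_mul]
      exact iter_adH_mul _ (m + n) m n _ _ le_rfl hm hn
  | add a b ha hb =>
      obtain ⟨m, hm⟩ := ha
      obtain ⟨n, hn⟩ := hb
      refine ⟨m + n, ?_⟩
      rw [map_add, iter_adH_add,
        iter_adH_le _ (Nat.le_add_right m n) hm,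
        iter_adH_le _ (Nat.le_add_left n m) hn, add_zero]


lemma mul_eq_add_adH (u a : HWeyl w₁ w₂) : u * a = a * u + adH u a := by
  unfold adH; rw [add_sub_cancel]

lemma mul_eq_sub_adH (u a : HWeyl w₁ w₂) : a * u = u * a - adH u a := by
  unfold adH; rw [sub_sub_cancel]

lemma ore_left (u : HWeyl w₁ w₂) :
    ∀ N a, (adH u)^[N] a = 0 → ∃ a', u ^ N * a = a' * u := by
  intro N
  induction N with
  | zero =>
      intro a ha
      simp only [Function.iterate_zero_apply] at ha
      exact ⟨0, by rw [ha, mul_zero, zero_mul]⟩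
  | succ N ih =>
      intro a ha
      obtain ⟨b, hb⟩ := ih (adH u a) (by rwa [← Function.iterate_succ_apply])
      refine ⟨u ^ N * a + b, ?_⟩
      rw [pow_succ, mul_assoc, mul_eq_add_adH u a, mul_add, ← mul_assoc, hb, add_mul]

lemma ore_right (u : HWeyl w₁ w₂) :
    ∀ N a, (adH u)^[N] a = 0 → ∃ a', a * u ^ N = u * a' := by
  intro N
  induction N with
  | zero =>
      intro a ha
      simp only [Function.iterate_zero_apply] at ha
      exact ⟨0, by rw [ha, zero_mul, mul_zero]⟩
  | succ N ih =>
      intro a ha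
      obtain ⟨b, hb⟩ := ih (adH u a) (by rwa [← Function.iterate_succ_apply])
      refine ⟨a * u ^ N - b, ?_⟩
      rw [pow_succ', ← mul_assoc, mul_eq_sub_adH u a, sub_mul, hb, mul_sub,
        mul_assoc]


lemma mono_mul (i j a b : ℕ) :
    (HX w₁ w₂ ^ i * HZ w₁ w₂ ^ a) * (HX w₁ w₂ ^ j * HZ w₁ w₂ ^ b)
      = HX w₁ w₂ ^ (i + j) * HZ w₁ w₂ ^ (a + b) := by
  rw [mul_assoc, ← mul_assoc (HZ w₁ w₂ ^ a), ((z_comm (HX w₁ w₂ ^ j)).pow_left a).eq,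
    mul_assoc, ← pow_add, ← mul_assoc, ← pow_add]

lemma homog_mul (p q : Polynomial ℂ) (hp : p ≠ 0) (hq : q ≠ 0) :
    homogX w₁ w₂ (p * q) = homogX w₁ w₂ p * homogX w₁ w₂ q := by
  classical
  set dp := p.natDegree with hdp
  set dq := q.natDegree with hdq
  set g : ℕ × ℕ → HWeyl w₁ w₂ := fun x =>
    (p.coeff x.1 * q.coeff x.2) •
      (HX w₁ w₂ ^ (x.1 + x.2) * HZ w₁ w₂ ^ (w₁ * (dp + dq - (x.1 + x.2)))) with hg
  set big : Finset (ℕ × ℕ) := Finset.range (dp + dq + 1) ×ˢ Finset.range (dp + dq + 1)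
    with hbig
  have hvan : ∀ x ∈ big, ¬(x.1 ≤ dp ∧ x.2 ≤ dq) → g x = 0 := by
    intro x _ hx
    have : p.coeff x.1 = 0 ∨ q.coeff x.2 = 0 := by
      rcases not_and_or.1 hx with h | h
      · exact Or.inl (Polynomial.coeff_eq_zero_of_natDegree_lt (by omega))
      · exact Or.inr (Polynomial.coeff_eq_zero_of_natDegree_lt (by omega))
    rcases this with h | h <;> simp [hg, h]
  have hR : homogX w₁ w₂ p * homogX w₁ w₂ q = ∑ x ∈ big, g x := by
    have step1 : homogX w₁ w₂ p * homogX w₁ w₂ q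
        = ∑ x ∈ Finset.range (dp + 1) ×ˢ Finset.range (dq + 1), g x := by
      unfold homogX
      rw [Finset.sum_mul_sum, ← Finset.sum_product']
      refine Finset.sum_congr rfl fun x hx => ?_
      obtain ⟨hx1, hx2⟩ := Finset.mem_product.1 hx
      rw [Finset.mem_range] at hx1 hx2
      rw [smul_mul_smul_comm, mono_mul, hg]
      have he : w₁ * (dp - x.1) + w₁ * (dq - x.2) = w₁ * (dp + dq - (x.1 + x.2)) := by
        rw [← Nat.mul_add]
        congr 1
        omega
      rw [he]
    rw [step1]
    refine Finset.sum_subset (Finset.product_subset_product ?_ ?_) ?_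
    · exact Finset.range_subset_range.2 (by omega)
    · exact Finset.range_subset_range.2 (by omega)
    · intro x hx hnx
      refine hvan x hx ?_
      simp only [Finset.mem_product, Finset.mem_range] at hnx
      omega
  have hL : homogX w₁ w₂ (p * q) = ∑ x ∈ big, g x := by
    have step1 : homogX w₁ w₂ (p * q)
        = ∑ k ∈ Finset.range (dp + dq + 1), ∑ x ∈ Finset.HasAntidiagonal.antidiagonal k, g x := by
      unfold homogX
      rw [Polynomial.natDegree_mul hp hq]
      refine Finset.sum_congr rfl fun k hk => ?_
      rw [Polynomial.coeff_mul, Finset.sum_smul]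
      refine Finset.sum_congr rfl fun x hx => ?_
      rw [Finset.HasAntidiagonal.mem_antidiagonal] at hx
      rw [hg]
      simp only
      rw [hx]
    rw [step1]
    have hdisj : (↑(Finset.range (dp + dq + 1)) : Set ℕ).PairwiseDisjoint
        Finset.HasAntidiagonal.antidiagonal := by
      intro k _ l _ hkl
      simp only [Function.onFun, Finset.disjoint_left]
      intro x hx hx'
      rw [Finset.HasAntidiagonal.mem_antidiagonal] at hx hx'
      exact hkl (hx ▸ hx')
    rw [← Finset.sum_biUnion hdisj]
    have hset : (Finset.range (dp + dq + 1)).biUnion Finset.HasAntidiagonal.antidiagonal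
        = big.filter (fun x => x.1 + x.2 ≤ dp + dq) := by
      ext x
      simp only [Finset.mem_biUnion, Finset.mem_filter, hbig, Finset.mem_product,
        Finset.mem_range, Finset.HasAntidiagonal.mem_antidiagonal]
      constructor
      · rintro ⟨k, hk, hx⟩
        omega
      · intro h
        exact ⟨x.1 + x.2, by omega, rfl⟩
    rw [hset]
    refine Finset.sum_subset (Finset.filter_subset _ _) ?_
    intro x hx hnx
    refine hvan x hx ?_
    simp only [Finset.mem_filter, hx, true_and] at hnx
    omega
  rw [hL, hR]

lemma homog_one : homogX w₁ w₂ 1 = 1 := by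
  unfold homogX
  simp

lemma homog_pow (q : Polynomial ℂ) (hq : q ≠ 0) (N : ℕ) :
    homogX w₁ w₂ (q ^ N) = homogX w₁ w₂ q ^ N := by
  induction N with
  | zero => simp [homog_one]
  | succ N ih => rw [pow_succ, homog_mul _ _ (pow_ne_zero _ hq) hq, ih, pow_succ]

end HWA

/-- Every homogenized polynomial `𝐪₁(X,Z)` of a nonzero `q₁(x) ∈ ℂ[x]` is locally
ad-nilpotent in `𝐀(w)`, and consequently the set `U₁` of all such homogenizations
satisfies the left and right Ore conditions in `𝐀(w)`. -/
theorem homogX_locally_ad_nilpotent_and_ore (w₁ w₂ : ℕ) (h₁ : 0 < w₁) (h₂ : 0 < w₂) :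
    (∀ q : Polynomial ℂ, q ≠ 0 → ∀ a : HWeyl w₁ w₂, ∃ N : ℕ,
      (fun b => homogX w₁ w₂ q * b - b * homogX w₁ w₂ q)^[N] a = 0) ∧
    (∀ q : Polynomial ℂ, q ≠ 0 → ∀ a : HWeyl w₁ w₂,
      (∃ q' : Polynomial ℂ, q' ≠ 0 ∧ ∃ a' : HWeyl w₁ w₂,
        a * homogX w₁ w₂ q' = homogX w₁ w₂ q * a') ∧
      (∃ q' : Polynomial ℂ, q' ≠ 0 ∧ ∃ a' : HWeyl w₁ w₂,
        homogX w₁ w₂ q' * a = a' * homogX w₁ w₂ q)) := by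
  constructor
  · intro q hq a
    exact HWA.locally_nilpotent q a
  · intro q hq a
    obtain ⟨N, hN⟩ := HWA.locally_nilpotent q a
    constructor
    · obtain ⟨a', ha'⟩ := HWA.ore_right (homogX w₁ w₂ q) N a hN
      exact ⟨q ^ N, pow_ne_zero _ hq, a', by rw [HWA.homog_pow q hq N, ha']⟩
    · obtain ⟨a', ha'⟩ := HWA.ore_left (homogX w₁ w₂ q) N a hN
      exact ⟨q ^ N, pow_ne_zero _ hq, a', by rw [HWA.homog_pow q hq N, ha']⟩
end
end

section
/- Every ideal class of the polynomial ring ℂ[x,y] contains a unique ideal of finite codimension. That is: every nonzero ideal I ⊆ ℂ[x,y] is isomorphic as a module to an ideal of finite codimension, and if two ideals I, J of finite ℂ-codimension in ℂ[x,y] are isomorphic as ℂ[x,y]-modules, then I = J. -/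
/-!
`ℂ[x,y]` is a UFD. Dividing a nonzero ideal `I` by a common divisor of its elements that is
maximal for divisibility gives an isomorphic ideal whose elements have no common non-unit
factor. Viewed in `ℂ[x][y]`, such an ideal contains a nonzero element of `ℂ[x]`: pseudo-division
by an element `f` of least `y`-degree shows that the primitive part of `f` divides every element,
so it is a unit. By symmetry the ideal also contains a nonzero polynomial in `y` alone, so its
quotient is finite-dimensional. Conversely, modulo an ideal of finite codimension `x` and `y` are
algebraic, so a prime common factor would divide some `x - r` and some `y - s`, which is absurd.

For uniqueness, an isomorphism `φ : I ≃ J` satisfies `φ(a) b = a φ(b)`. Cancelling the common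
factor of `a` and `φ(a)` leaves coprime `a'`, `p'` with `p' b = a' φ(b)`; then `p'` divides every
element of `J`, hence is a unit, so `I ≤ J`, and symmetrically.
-/

open Polynomial

namespace Ideal

variable {R : Type*} [CommRing R]

def HasUnitGcd (I : Ideal R) : Prop :=
  ∀ d : R, (∀ x ∈ I, d ∣ x) → IsUnit d

theorem HasUnitGcd.ne_bot [Nontrivial R] {I : Ideal R} (hI : I.HasUnitGcd) : I ≠ ⊥ := by
  rintro rfl
  exact not_isUnit_zero (hI 0 fun x hx => by rw [(mem_bot).1 hx])

theorem HasUnitGcd.comap {S : Type*} [CommRing S] {I : Ideal R} (hI : I.HasUnitGcd)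
    (e : S ≃+* R) : (I.comap e).HasUnitGcd := by
  intro d hd
  have : IsUnit (e d) := hI (e d) fun y hy => by
    simpa using _root_.map_dvd e (hd (e.symm y) (by rwa [mem_comap, RingEquiv.apply_symm_apply]))
  simpa using this.map e.symm

theorem exists_hasUnitGcd_linearEquiv [IsDomain R] [WfDvdMonoid R] {I : Ideal R} (hI : I ≠ ⊥) :
    ∃ J : Ideal R, J.HasUnitGcd ∧ Nonempty (I ≃ₗ[R] J) := by
  obtain ⟨a, haI, ha0⟩ := (Submodule.ne_bot_iff I).mp hI
  -- a common divisor `d` of `I` whose cofactor in `a` is minimal for strict divisibility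
  obtain ⟨q, ⟨d, hdI, rfl⟩, hmin⟩ := wellFounded_dvdNotUnit.has_min
    {q | ∃ d, (∀ x ∈ I, d ∣ x) ∧ d * q = a} ⟨a, 1, fun x _ => one_dvd x, one_mul a⟩
  have hd0 : d ≠ 0 := left_ne_zero_of_mul ha0
  set J : Ideal R := Submodule.comap (LinearMap.mulLeft R d) I
  have hJ : Submodule.map (LinearMap.mulLeft R d) J = I :=
    Submodule.map_comap_eq_of_le fun x hx => (hdI x hx).imp fun y hy => hy.symm
  refine ⟨J, fun e he => ?_, ⟨(LinearEquiv.ofEq _ _ hJ).symm.trans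
    (Submodule.equivMapOfInjective _ (mul_right_injective₀ hd0) J).symm⟩⟩
  obtain ⟨q', rfl⟩ := he q haI
  have hde : ∀ x ∈ I, d * e ∣ x := fun x hx => by
    obtain ⟨y, rfl⟩ := hdI x hx
    exact mul_dvd_mul_left d (he y hx)
  by_contra hu
  exact hmin q' ⟨d * e, hde, by ring⟩
    ⟨right_ne_zero_of_mul (right_ne_zero_of_mul ha0), e, hu, mul_comm e q'⟩

theorem le_of_linearEquiv_of_hasUnitGcd [IsDomain R] [UniqueFactorizationMonoid R]
    {I J : Ideal R} (hI : I ≠ ⊥) (hJ : J.HasUnitGcd) (φ : I ≃ₗ[R] J) : I ≤ J := by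
  obtain ⟨a, haI, ha0⟩ := (Submodule.ne_bot_iff I).mp hI
  have cross : ∀ b (hb : b ∈ I), (φ ⟨a, haI⟩ : R) * b = a * φ ⟨b, hb⟩ := fun b hb => by
    have h : b • (⟨a, haI⟩ : I) = a • ⟨b, hb⟩ := Subtype.ext (mul_comm b a)
    have := congrArg (fun z => (φ z : R)) h
    simp only [map_smul, Submodule.coe_smul, smul_eq_mul] at this
    rwa [mul_comm]
  obtain ⟨a', p', c, hrel, rfl, hp⟩ :=
    UniqueFactorizationMonoid.exists_reduced_factors a ha0 (φ ⟨a, haI⟩ : R)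
  have cross' : ∀ b (hb : b ∈ I), p' * b = a' * φ ⟨b, hb⟩ := fun b hb =>
    mul_left_cancel₀ (left_ne_zero_of_mul ha0) (by rw [← mul_assoc, hp, cross, mul_assoc])
  have hp' : IsUnit p' := hJ p' fun y hy => by
    obtain ⟨⟨b, hb⟩, hby⟩ := φ.surjective ⟨y, hy⟩
    refine hrel.symm.dvd_of_dvd_mul_left ⟨b, ?_⟩
    rw [cross' b hb, hby]
  intro x hx
  rw [← unit_mul_mem_iff_mem J hp', cross' x hx]
  exact J.mul_mem_left a' (φ ⟨x, hx⟩).2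

theorem HasUnitGcd.eq_of_linearEquiv [IsDomain R] [UniqueFactorizationMonoid R]
    {I J : Ideal R} (hI : I.HasUnitGcd) (hJ : J.HasUnitGcd) (φ : I ≃ₗ[R] J) : I = J :=
  le_antisymm (le_of_linearEquiv_of_hasUnitGcd hI.ne_bot hJ φ)
    (le_of_linearEquiv_of_hasUnitGcd hJ.ne_bot hI φ.symm)

theorem isAlgebraic_quotient_mk_iff {k A : Type*} [CommRing k] [CommRing A] [Algebra k A]
    {J : Ideal A} {a : A} :
    IsAlgebraic k (Quotient.mk J a) ↔ ∃ p : k[X], p ≠ 0 ∧ aeval a p ∈ J := by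
  have h (p : k[X]) : aeval (Quotient.mk J a) p = Quotient.mk J (aeval a p) := by
    rw [← Quotient.mkₐ_eq_mk k, aeval_algHom_apply]
  simp only [IsAlgebraic, h, Quotient.eq_zero_iff_mem]

end Ideal

namespace Polynomial

section PseudoDivision

variable {R : Type*} [CommRing R] [IsDomain R]

theorem degree_C_leadingCoeff_mul_sub_lt {f g : R[X]} (hf : f ≠ 0) (h : f.degree ≤ g.degree) :
    (C f.leadingCoeff * g - C g.leadingCoeff * X ^ (g.natDegree - f.natDegree) * f).degree
      < g.degree := by
  have hg : g ≠ 0 := by rintro rfl; exact hf (degree_eq_bot.1 (le_bot_iff.1 (by simpa using h)))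
  have hnat : f.natDegree ≤ g.natDegree := natDegree_le_natDegree h
  have hlf : f.leadingCoeff ≠ 0 := leadingCoeff_ne_zero.2 hf
  have hlg : g.leadingCoeff ≠ 0 := leadingCoeff_ne_zero.2 hg
  calc _ < (C f.leadingCoeff * g).degree := by
        refine degree_sub_lt_left ?_ (mul_ne_zero (C_ne_zero.2 hlf) hg) ?_
        · rw [degree_C_mul hlf, degree_mul, degree_C_mul_X_pow _ hlg, degree_eq_natDegree hf,
            degree_eq_natDegree hg, ← Nat.cast_add, Nat.sub_add_cancel hnat]
        · simp only [leadingCoeff_mul, leadingCoeff_C, leadingCoeff_X_pow, one_mul, mul_comm]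
    _ = g.degree := degree_C_mul hlf

theorem exists_C_leadingCoeff_pow_mul_eq_mul_add {f : R[X]} (hf : f ≠ 0) (g : R[X]) :
    ∃ (k : ℕ) (q r : R[X]), C f.leadingCoeff ^ k * g = q * f + r ∧ r.degree < f.degree := by
  induction g using degree_lt_wf.induction with
  | _ g ih =>
  by_cases hdeg : g.degree < f.degree
  · exact ⟨0, 0, g, by simp, hdeg⟩
  obtain ⟨k, q, r, hqr, hr⟩ := ih _ (degree_C_leadingCoeff_mul_sub_lt hf (not_lt.1 hdeg))
  refine ⟨k + 1, C f.leadingCoeff ^ k * C g.leadingCoeff * X ^ (g.natDegree - f.natDegree) + q,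
    r, ?_, hr⟩
  linear_combination hqr

end PseudoDivision

variable {R : Type*} [CommRing R] [IsDomain R] [NormalizedGCDMonoid R]

theorem IsPrimitive.dvd_of_dvd_C_mul {p q : R[X]} (hp : p.IsPrimitive) {a : R} (ha : a ≠ 0)
    (h : p ∣ C a * q) : p ∣ q := by
  rcases eq_or_ne q 0 with rfl | hq
  · exact dvd_zero p
  have haq : C a * q ≠ 0 := mul_ne_zero (C_ne_zero.2 ha) hq
  rw [← hp.dvd_primPart_iff_dvd haq, (associated_primPart_mul haq).dvd_iff_dvd_right,
    (isUnit_primPart_C a).dvd_mul_left, hp.dvd_primPart_iff_dvd hq] at h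
  exact h

theorem exists_C_mem_of_hasUnitGcd {J : Ideal R[X]} (hJ : J.HasUnitGcd) :
    ∃ c : R, c ≠ 0 ∧ C c ∈ J := by
  obtain ⟨f, hfJ, hf0⟩ := (Submodule.ne_bot_iff J).mp hJ.ne_bot
  obtain ⟨f, ⟨hfJ, hf0⟩, hmin⟩ := degree_lt_wf.has_min {f | f ∈ J ∧ f ≠ 0} ⟨f, hfJ, hf0⟩
  -- pseudo-division by `f` leaves a remainder in `J` of smaller degree, hence zero
  have hdvd : ∀ g ∈ J, f.primPart ∣ g := fun g hg => by
    obtain ⟨k, q, r, hqr, hr⟩ := exists_C_leadingCoeff_pow_mul_eq_mul_add hf0 g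
    have hr0 : r = 0 := by
      by_contra hr0
      refine hmin r ⟨?_, hr0⟩ hr
      rw [eq_sub_of_add_eq' hqr.symm]
      exact J.sub_mem (J.mul_mem_left _ hg) (J.mul_mem_left _ hfJ)
    refine f.isPrimitive_primPart.dvd_of_dvd_C_mul (pow_ne_zero k (leadingCoeff_ne_zero.2 hf0)) ?_
    rw [C_pow, hqr, hr0, add_zero]
    exact f.primPart_dvd.mul_left q
  obtain ⟨u, hu⟩ := hJ _ hdvd
  refine ⟨f.content, content_eq_zero_iff.not.2 hf0, ?_⟩
  have hf : C f.content = f * ↑u⁻¹ := by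
    rw [Units.eq_mul_inv_iff_mul_eq, hu]; exact f.eq_C_content_mul_primPart.symm
  rw [hf]
  exact J.mul_mem_right _ hfJ

end Polynomial

theorem Prime.exists_dvd_sub_algebraMap_of_dvd_aeval {k A : Type*} [Field k] [IsAlgClosed k]
    [CommRing A] [Algebra k A] {e : A} (he : Prime e) {a : A} {p : k[X]} (hp : p ≠ 0)
    (h : e ∣ aeval a p) : ∃ r : k, e ∣ a - algebraMap k A r := by
  rw [(IsAlgClosed.splits p).eq_prod_roots, map_mul, aeval_C, map_multiset_prod,
    Multiset.map_map] at h
  have hu : IsUnit (algebraMap k A p.leadingCoeff) :=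
    (isUnit_iff_ne_zero.2 (leadingCoeff_ne_zero.2 hp)).map _
  obtain ⟨r, -, hr⟩ := he.exists_mem_multiset_map_dvd (hu.dvd_mul_left.1 h)
  exact ⟨r, by simpa using hr⟩

namespace MvPolynomial

variable {σ k : Type*} [Field k]

theorem irreducible_X_sub_C (i : σ) (r : k) : Irreducible (X i - C r : MvPolynomial σ k) := by
  classical
  have hcoeff : coeff (Finsupp.single i 1) (X i - C r : MvPolynomial σ k) = 1 := by
    rw [coeff_sub, coeff_C, if_neg (Finsupp.single_ne_zero.2 one_ne_zero).symm, sub_zero]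
    simp
  refine irreducible_of_totalDegree_eq_one (le_antisymm ?_ ?_) fun x hx => ?_
  · exact (totalDegree_sub_C_le _ _).trans (totalDegree_X i).le
  · simpa using le_totalDegree (s := Finsupp.single i 1) (by simp [mem_support_iff, hcoeff])
  · exact isUnit_of_dvd_one (hcoeff ▸ hx _)

theorem isUnit_of_dvd_X_sub_C_of_dvd_X_sub_C {i j : σ} (hij : i ≠ j) {e : MvPolynomial σ k}
    {r s : k} (hi : e ∣ X i - C r) (hj : e ∣ X j - C s) : IsUnit e := by
  classical
  obtain ⟨q, hq⟩ := hi
  refine ((irreducible_X_sub_C i r).isUnit_or_isUnit hq).resolve_right fun hq' => ?_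
  have hdvd : X i - C r ∣ X j - C s := (Associated.symm ⟨hq'.unit, hq.symm⟩).dvd.trans hj
  -- evaluate at `X i = r`, keeping `X j` as a variable
  have := _root_.map_dvd (aeval (Function.update (fun _ => Polynomial.X) i (Polynomial.C r))) hdvd
  simp [hij.symm] at this
  exact Polynomial.X_ne_C s (sub_eq_zero.1 this)

theorem hasUnitGcd_of_isAlgebraic [IsAlgClosed k] {J : Ideal (MvPolynomial σ k)} {i j : σ}
    (hij : i ≠ j) (hi : IsAlgebraic k (Ideal.Quotient.mk J (X i)))
    (hj : IsAlgebraic k (Ideal.Quotient.mk J (X j))) : J.HasUnitGcd := by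
  intro d hd
  obtain ⟨p, hp0, hpJ⟩ := Ideal.isAlgebraic_quotient_mk_iff.1 hi
  obtain ⟨p', hp'0, hp'J⟩ := Ideal.isAlgebraic_quotient_mk_iff.1 hj
  by_contra hdu
  have hd0 : d ≠ 0 :=
    ne_zero_of_dvd_ne_zero (fun h0 => transcendental_X k i ⟨p, hp0, h0⟩) (hd _ hpJ)
  obtain ⟨e, he, hed⟩ := WfDvdMonoid.exists_irreducible_factor hdu hd0
  obtain ⟨r, hr⟩ := he.prime.exists_dvd_sub_algebraMap_of_dvd_aeval hp0 (hed.trans (hd _ hpJ))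
  obtain ⟨s, hs⟩ := he.prime.exists_dvd_sub_algebraMap_of_dvd_aeval hp'0 (hed.trans (hd _ hp'J))
  exact he.not_isUnit (isUnit_of_dvd_X_sub_C_of_dvd_X_sub_C hij hr hs)

theorem hasUnitGcd_of_finiteDimensional [IsAlgClosed k] [Nontrivial σ]
    (J : Ideal (MvPolynomial σ k)) [FiniteDimensional k (MvPolynomial σ k ⧸ J)] :
    J.HasUnitGcd :=
  let ⟨_, _, hij⟩ := exists_pair_ne σ
  hasUnitGcd_of_isAlgebraic hij (Algebra.IsAlgebraic.isAlgebraic _)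
    (Algebra.IsAlgebraic.isAlgebraic _)

theorem finiteDimensional_quotient_of_isAlgebraic [Finite σ] {J : Ideal (MvPolynomial σ k)}
    (h : ∀ i, IsAlgebraic k (Ideal.Quotient.mk J (X i))) :
    FiniteDimensional k (MvPolynomial σ k ⧸ J) := by
  have hgen : Algebra.adjoin k (Set.range fun i => Ideal.Quotient.mk J (X i)) = ⊤ := by
    simp_rw [Algebra.adjoin_range_eq_range_aeval, ← Ideal.Quotient.mkₐ_eq_mk k, ← comp_aeval,
      aeval_X_left, AlgHom.comp_id, AlgHom.range_eq_top]
    exact Ideal.Quotient.mkₐ_surjective k J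
  have : Algebra.IsIntegral k (MvPolynomial σ k ⧸ J) := by
    rw [← integralClosure_eq_top_iff, eq_top_iff, ← hgen]
    exact Algebra.adjoin_le (Set.range_subset_iff.2 fun i => (h i).isIntegral)
  exact Algebra.IsIntegral.finite

noncomputable def finTwoAlgEquiv (R : Type*) [CommSemiring R] :
    MvPolynomial (Fin 2) R ≃ₐ[R] R[X][X] :=
  (finSuccEquiv R 1).trans <| Polynomial.mapAlgEquiv <|
    (finSuccEquiv R 0).trans <| Polynomial.mapAlgEquiv <| isEmptyAlgEquiv R (Fin 0)

theorem finTwoAlgEquiv_X_one (R : Type*) [CommSemiring R] :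
    finTwoAlgEquiv R (X 1) = Polynomial.C Polynomial.X := by
  simp only [finTwoAlgEquiv, AlgEquiv.trans_apply]
  rw [show (X 1 : MvPolynomial (Fin 2) R) = X (Fin.succ 0) from rfl, finSuccEquiv_X_succ]
  simp [finSuccEquiv_X_zero]

theorem isAlgebraic_quotient_mk_X_of_hasUnitGcd {J : Ideal (MvPolynomial (Fin 2) k)}
    (hJ : J.HasUnitGcd) (i : Fin 2) : IsAlgebraic k (Ideal.Quotient.mk J (X i)) := by
  classical
  -- `e` sends `X i` to the variable of the coefficient ring `k[X]`
  let e := (renameEquiv k (Equiv.swap i 1)).trans (finTwoAlgEquiv k)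
  have he (p : k[X]) : e (Polynomial.aeval (X i) p) = Polynomial.C p := by
    rw [← Polynomial.aeval_algHom_apply]
    simp only [e, AlgEquiv.trans_apply, renameEquiv_apply, rename_X, Equiv.swap_apply_left,
      finTwoAlgEquiv_X_one]
    rw [← Polynomial.algebraMap_eq, Polynomial.aeval_algebraMap_apply,
      Polynomial.aeval_X_left_apply, Polynomial.algebraMap_eq]
  obtain ⟨p, hp0, hpJ⟩ := Polynomial.exists_C_mem_of_hasUnitGcd (hJ.comap e.symm.toRingEquiv)
  refine Ideal.isAlgebraic_quotient_mk_iff.2 ⟨p, hp0, ?_⟩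
  simpa [← he] using hpJ

end MvPolynomial

/-- Every ideal class of `ℂ[x,y]` contains a unique ideal of finite codimension: every
nonzero ideal is isomorphic (as a module) to an ideal of finite codimension, and two
isomorphic ideals of finite codimension are equal. -/
theorem polynomial_ring_finite_codim_representative :
    (∀ I : Ideal (MvPolynomial (Fin 2) ℂ), I ≠ ⊥ →
      ∃ J : Ideal (MvPolynomial (Fin 2) ℂ),
        FiniteDimensional ℂ (MvPolynomial (Fin 2) ℂ ⧸ J) ∧
        Nonempty (I ≃ₗ[MvPolynomial (Fin 2) ℂ] J)) ∧
    (∀ I J : Ideal (MvPolynomial (Fin 2) ℂ),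
      FiniteDimensional ℂ (MvPolynomial (Fin 2) ℂ ⧸ I) →
      FiniteDimensional ℂ (MvPolynomial (Fin 2) ℂ ⧸ J) →
      Nonempty (I ≃ₗ[MvPolynomial (Fin 2) ℂ] J) → I = J) := by
  refine ⟨fun I hI => ?_, fun I J _ _ ⟨φ⟩ => ?_⟩
  · obtain ⟨J, hJ, hIJ⟩ := I.exists_hasUnitGcd_linearEquiv hI
    exact ⟨J, MvPolynomial.finiteDimensional_quotient_of_isAlgebraic
      (MvPolynomial.isAlgebraic_quotient_mk_X_of_hasUnitGcd hJ), hIJ⟩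
  · exact (MvPolynomial.hasUnitGcd_of_finiteDimensional I).eq_of_linearEquiv
      (MvPolynomial.hasUnitGcd_of_finiteDimensional J) φ
end

section
/- Let M be a nonzero right ideal of the Weyl algebra A contained in ℂ(x)[y] whose intersection with ℂ[x] is nonzero, such that the leading coefficients (in y) of all elements of M lie in ℂ[x] and M contains an element with constant nonzero leading coefficient. If M' is another such fractional ideal and M' = qM for some q in the quotient field Q of A, then q is a nonzero constant and M' = M. -/
/-!
Since `[x, y] = 1`, the element `x` is transcendental over `ℂ` and `a ↦ a y - y a` preserves
`ℂ(x)`; hence every element of `ℂ(x)[y]` has a degree in `y`, and leading coefficients multiply.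
Writing `p(x) ∈ M`, `r(x) ∈ M'`, both `q = (q p(x)) p(x)⁻¹` and `q⁻¹ = (q⁻¹ r(x)) r(x)⁻¹` lie
in `ℂ(x)[y]`, so their degrees add up to `0` and `q ∈ ℂ(x)`. Multiplying an element of `M` with
constant leading coefficient by `q` and using (2) for `M'` shows that `q` is a polynomial in `x`;
symmetrically so is `q⁻¹`. Hence `q` is a nonzero constant, and `M' = qM = M`.
-/

section Weyl

open Polynomial

variable {K D : Type*} [Field K] [Ring D] [Algebra K D] {x y : D}

theorem aeval_mul_sub_mul_aeval (hxy : x * y - y * x = 1) (p : K[X]) :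
    aeval x p * y - y * aeval x p = aeval x (derivative p) := by
  induction p using Polynomial.induction_on' with
  | add p q hp hq => simp only [map_add, add_mul, mul_add, ← hp, ← hq]; abel
  | monomial n a =>
    induction n with
    | zero => simp [Algebra.commutes]
    | succ n ih =>
      have hxy' : x * y = y * x + 1 := by rw [← hxy]; abel
      rw [← monomial_mul_X, derivative_mul, derivative_X, mul_one, map_add, map_mul, map_mul,
        aeval_X, ← ih, mul_assoc, hxy']
      noncomm_ring

theorem transcendental_of_mul_sub_mul_eq_one [CharZero K] [Nontrivial D]
    (hxy : x * y - y * x = 1) : Transcendental K x := by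
  -- roots of `p` are roots of `p'`, but the `natDegree p`-th derivative is a nonzero constant
  rw [transcendental_iff]
  intro p hp
  by_contra hp0
  have hder : ∀ k, aeval x (derivative^[k] p) = 0 := by
    intro k
    induction k with
    | zero => exact hp
    | succ k ih => rw [Function.iterate_succ_apply', ← aeval_mul_sub_mul_aeval hxy, ih]; simp
  have hlast := hder p.natDegree
  set q := derivative^[p.natDegree] p
  have hq : q = C (q.coeff 0) :=
    eq_C_of_natDegree_eq_zero (by simpa using natDegree_iterate_derivative p p.natDegree)
  have hq0 : q.coeff 0 ≠ 0 := by
    rw [coeff_iterate_derivative, zero_add, Nat.descFactorial_self, nsmul_eq_mul]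
    exact mul_ne_zero (Nat.cast_ne_zero.mpr p.natDegree.factorial_ne_zero)
      (leadingCoeff_ne_zero.mpr hp0)
  rw [hq, aeval_C] at hlast
  exact hq0 (FaithfulSMul.algebraMap_injective K D (by rw [hlast, map_zero]))

theorem Transcendental.aeval_ne_zero (hx : Transcendental K x) {p : K[X]} (hp : p ≠ 0) :
    Polynomial.aeval x p ≠ 0 :=
  fun h => hp (transcendental_iff.mp hx p h)

theorem Transcendental.exists_eq_algebraMap_of_aeval_mul_aeval_eq_one
    (hx : Transcendental K x) {p r : K[X]} (h : Polynomial.aeval x p * Polynomial.aeval x r = 1) :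
    ∃ c : K, c ≠ 0 ∧ Polynomial.aeval x p = algebraMap K D c := by
  have hpr : p * r = 1 := transcendental_iff_injective.mp hx (by rw [map_mul, map_one, h])
  obtain ⟨c, hc, rfl⟩ := Polynomial.isUnit_iff.mp (IsUnit.of_mul_eq_one r hpr)
  exact ⟨c, hc.ne_zero, aeval_C x c⟩

end Weyl

section RatFuncSubfield

open Polynomial

variable {K D : Type*} [Field K] [DivisionRing D] [Algebra K D]

theorem inv_mul_sub_mul_inv {a : D} (ha : a ≠ 0) (y : D) :
    a⁻¹ * y - y * a⁻¹ = -(a⁻¹ * (a * y - y * a) * a⁻¹) := by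
  simp only [mul_sub, sub_mul, mul_assoc, mul_inv_cancel₀ ha, ← mul_assoc a⁻¹ a, inv_mul_cancel₀ ha,
    one_mul, mul_one, neg_sub]

theorem commute_aeval (x : D) (p r : K[X]) : Commute (aeval x p) (aeval x r) :=
  (Commute.all p r).map (aeval x)

/-- The subfield `K(x)` of `D`. -/
def ratFuncSubfield (x : D) (hx : Transcendental K x) : Subfield D where
  carrier := {q | ∃ p r : K[X], r ≠ 0 ∧ q = aeval x p * (aeval x r)⁻¹}
  zero_mem' := ⟨0, 1, one_ne_zero, by simp⟩
  one_mem' := ⟨1, 1, one_ne_zero, by simp⟩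
  neg_mem' := by
    rintro _ ⟨p, r, hr, rfl⟩
    exact ⟨-p, r, hr, by rw [map_neg, neg_mul]⟩
  inv_mem' := by
    rintro _ ⟨p, r, hr, rfl⟩
    rcases eq_or_ne p 0 with rfl | hp
    · exact ⟨0, 1, one_ne_zero, by simp⟩
    · exact ⟨r, p, hp, by rw [mul_inv_rev, inv_inv]⟩
  mul_mem' := by
    rintro _ _ ⟨p₁, r₁, hr₁, rfl⟩ ⟨p₂, r₂, hr₂, rfl⟩
    refine ⟨p₁ * p₂, r₂ * r₁, mul_ne_zero hr₂ hr₁, ?_⟩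
    rw [map_mul, map_mul, mul_inv_rev, mul_assoc, ← mul_assoc (aeval x r₁)⁻¹,
      ← (commute_aeval x p₂ r₁).inv_right₀.eq, mul_assoc, mul_assoc]
  add_mem' := by
    rintro _ _ ⟨p₁, r₁, hr₁, rfl⟩ ⟨p₂, r₂, hr₂, rfl⟩
    refine ⟨p₁ * r₂ + r₁ * p₂, r₁ * r₂, mul_ne_zero hr₁ hr₂, ?_⟩
    simp only [← div_eq_mul_inv, map_add, map_mul]
    exact (commute_aeval x r₁ p₂).div_add_div (commute_aeval x r₁ r₂)
      (hx.aeval_ne_zero hr₁) (hx.aeval_ne_zero hr₂)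

variable {x : D} {hx : Transcendental K x}

theorem aeval_mem_ratFuncSubfield (p : K[X]) : aeval x p ∈ ratFuncSubfield x hx :=
  ⟨p, 1, one_ne_zero, by simp⟩

theorem commutator_mem_ratFuncSubfield {y : D} (hxy : x * y - y * x = 1) {c : D}
    (hc : c ∈ ratFuncSubfield x hx) : c * y - y * c ∈ ratFuncSubfield x hx := by
  obtain ⟨p, r, hr, rfl⟩ := hc
  have hR : aeval x r ≠ 0 := hx.aeval_ne_zero hr
  have hleibniz : aeval x p * (aeval x r)⁻¹ * y - y * (aeval x p * (aeval x r)⁻¹) =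
      (aeval x p * y - y * aeval x p) * (aeval x r)⁻¹ +
        aeval x p * ((aeval x r)⁻¹ * y - y * (aeval x r)⁻¹) := by noncomm_ring
  have hmem (p : K[X]) : aeval x p ∈ ratFuncSubfield x hx := aeval_mem_ratFuncSubfield p
  have hinv := (ratFuncSubfield x hx).inv_mem (hmem r)
  rw [hleibniz, inv_mul_sub_mul_inv hR, aeval_mul_sub_mul_aeval hxy, aeval_mul_sub_mul_aeval hxy]
  exact add_mem (mul_mem (hmem _) hinv)
    (mul_mem (hmem p) (neg_mem (mul_mem (mul_mem hinv (hmem _)) hinv)))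

end RatFuncSubfield

section Expansion

variable {D : Type*} [Ring D] {F : Subring D} {y : D}

/-- `t` is the coefficient of `y ^ n` in some expansion of `s` over `F`; it may be `0`. -/
def HasExpansion (F : Subring D) (y s : D) (n : ℕ) (t : D) : Prop :=
  ∃ a : ℕ → D, (∀ i, a i ∈ F) ∧ s = ∑ i ∈ Finset.range (n + 1), a i * y ^ i ∧ a n = t

namespace HasExpansion

variable {s s' t t' : D} {n m : ℕ}

theorem of_mem (hs : s ∈ F) : HasExpansion F y s 0 s :=
  ⟨fun _ => s, fun _ => hs, by simp, rfl⟩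

theorem zero : HasExpansion F y 0 n 0 :=
  ⟨fun _ => 0, fun _ => F.zero_mem, by simp, rfl⟩

theorem add (h : HasExpansion F y s n t) (h' : HasExpansion F y s' n t') :
    HasExpansion F y (s + s') n (t + t') := by
  obtain ⟨a, ha, rfl, rfl⟩ := h
  obtain ⟨b, hb, rfl, rfl⟩ := h'
  exact ⟨a + b, fun i => F.add_mem (ha i) (hb i), by simp [add_mul, Finset.sum_add_distrib], rfl⟩

theorem neg (h : HasExpansion F y s n t) : HasExpansion F y (-s) n (-t) := by
  obtain ⟨a, ha, rfl, rfl⟩ := h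
  exact ⟨-a, fun i => F.neg_mem (ha i), by simp [neg_mul], rfl⟩

theorem sub (h : HasExpansion F y s n t) (h' : HasExpansion F y s' n t') :
    HasExpansion F y (s - s') n (t - t') := by
  simpa only [sub_eq_add_neg] using h.add h'.neg

theorem mul_left {c : D} (hc : c ∈ F) (h : HasExpansion F y s n t) :
    HasExpansion F y (c * s) n (c * t) := by
  obtain ⟨a, ha, rfl, rfl⟩ := h
  exact ⟨fun i => c * a i, fun i => F.mul_mem hc (ha i), by simp [Finset.mul_sum, mul_assoc], rfl⟩

theorem sum {ι : Type*} (S : Finset ι) {f u : ι → D} (h : ∀ i ∈ S, HasExpansion F y (f i) n (u i)) :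
    HasExpansion F y (∑ i ∈ S, f i) n (∑ i ∈ S, u i) := by
  classical
  induction S using Finset.induction_on with
  | empty => simpa using zero
  | insert j S hj ih =>
    rw [Finset.sum_insert hj, Finset.sum_insert hj]
    exact (h j (S.mem_insert_self j)).add (ih fun i hi => h i (Finset.mem_insert_of_mem hi))

theorem pad (h : HasExpansion F y s n t) (hnm : n < m) : HasExpansion F y s m 0 := by
  obtain ⟨a, ha, rfl, -⟩ := h
  refine ⟨fun i => if i ≤ n then a i else 0, fun i => ?_, ?_, if_neg (by omega)⟩
  · dsimp only
    split_ifs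
    exacts [ha i, F.zero_mem]
  · dsimp only
    rw [← Finset.sum_range_add_sum_Ico _ (by omega : n + 1 ≤ m + 1),
      Finset.sum_eq_zero (s := Finset.Ico _ _) fun i hi => by
        rw [if_neg (by simp at hi; omega), zero_mul], add_zero]
    exact Finset.sum_congr rfl fun i hi => by rw [if_pos (by simp at hi; omega)]

theorem mem_of_zero (h : HasExpansion F y s 0 t) : s ∈ F := by
  obtain ⟨a, ha, rfl, -⟩ := h
  simpa using ha 0

theorem shift (h : HasExpansion F y s n t) : HasExpansion F y (s * y) (n + 1) t := by
  obtain ⟨a, ha, rfl, rfl⟩ := h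
  refine ⟨fun i => if i = 0 then 0 else a (i - 1), fun i => ?_, ?_, by simp⟩
  · dsimp only
    split_ifs
    exacts [F.zero_mem, ha _]
  · conv_rhs => rw [Finset.sum_range_succ']
    simp [Finset.sum_mul, pow_succ, mul_assoc]

theorem commutator (hy : ∀ c ∈ F, c * y - y * c ∈ F)
    (h : HasExpansion F y s n t) : HasExpansion F y (s * y - y * s) n (t * y - y * t) := by
  obtain ⟨a, ha, rfl, rfl⟩ := h
  refine ⟨fun i => a i * y - y * a i, fun i => hy _ (ha i), ?_, rfl⟩
  simp only [Finset.sum_mul, Finset.mul_sum, ← Finset.sum_sub_distrib, sub_mul, mul_assoc,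
    ← pow_succ, ← pow_succ']

theorem var_mul (hy : ∀ c ∈ F, c * y - y * c ∈ F) (h : HasExpansion F y s n t) :
    HasExpansion F y (y * s) (n + 1) t := by
  simpa using h.shift.sub ((h.commutator hy).pad n.lt_succ_self)

theorem mul (hy : ∀ c ∈ F, c * y - y * c ∈ F) (h : HasExpansion F y s n t)
    (h' : HasExpansion F y s' m t') : HasExpansion F y (s * s') (n + m) (t * t') := by
  obtain ⟨a, ha, rfl, rfl⟩ := h
  have hpow : ∀ i, HasExpansion F y (y ^ i * s') (m + i) t' := by
    intro i
    induction i with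
    | zero => simpa using h'
    | succ i ih =>
      rw [pow_succ', mul_assoc]
      exact ih.var_mul hy
  have hterm : ∀ i ∈ Finset.range (n + 1),
      HasExpansion F y (a i * (y ^ i * s')) (n + m) (if i = n then a n * t' else 0) := by
    intro i hi
    have hi' : i ≤ n := Nat.lt_succ_iff.mp (Finset.mem_range.mp hi)
    rcases hi'.eq_or_lt with rfl | hlt
    · simpa [add_comm] using (hpow i).mul_left (ha i)
    · rw [if_neg hlt.ne]
      exact ((hpow i).mul_left (ha i)).pad (by omega)
  simpa [Finset.sum_mul, mul_assoc] using sum _ hterm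

theorem top_unique (hindep : ∀ n t, HasExpansion F y 0 n t → t = 0) (h : HasExpansion F y s n t)
    (h' : HasExpansion F y s n t') : t = t' :=
  sub_eq_zero.mp (hindep n _ (by simpa using h.sub h'))

theorem degree_eq (hindep : ∀ n t, HasExpansion F y 0 n t → t = 0) (h : HasExpansion F y s n t)
    (h' : HasExpansion F y s m t') (ht : t ≠ 0) (ht' : t' ≠ 0) : n = m := by
  rcases lt_trichotomy n m with hlt | heq | hlt
  · exact absurd (top_unique hindep h' (h.pad hlt)) ht'
  · exact heq
  · exact absurd (top_unique hindep h (h'.pad hlt)) ht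

theorem exists_ne_zero (h : HasExpansion F y s n t) (hs : s ≠ 0) :
    ∃ m u, HasExpansion F y s m u ∧ u ≠ 0 := by
  induction n generalizing t with
  | zero => exact ⟨0, t, h, fun ht => hs (by obtain ⟨a, -, rfl, rfl⟩ := h; simp [ht])⟩
  | succ n ih =>
    rcases eq_or_ne t 0 with rfl | ht
    · obtain ⟨a, ha, rfl, hat⟩ := h
      exact ih ⟨a, ha, by rw [Finset.sum_range_succ, hat, zero_mul, add_zero], rfl⟩
    · exact ⟨_, t, h, ht⟩

end HasExpansion

theorem mem_of_hasExpansion_of_mul_eq_one [IsDomain D] (hy : ∀ c ∈ F, c * y - y * c ∈ F)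
    (hindep : ∀ n t, HasExpansion F y 0 n t → t = 0) {s s' t t' : D} {n m : ℕ}
    (h : HasExpansion F y s n t) (h' : HasExpansion F y s' m t') (hss' : s * s' = 1) : s ∈ F := by
  obtain ⟨n, t, h, ht⟩ := h.exists_ne_zero (left_ne_zero_of_mul_eq_one hss')
  obtain ⟨m, t', h', ht'⟩ := h'.exists_ne_zero (right_ne_zero_of_mul_eq_one hss')
  have hprod := h.mul hy h'
  rw [hss'] at hprod
  have hdeg := hprod.degree_eq hindep (.of_mem F.one_mem) (mul_ne_zero ht ht') one_ne_zero
  obtain rfl : n = 0 := (Nat.add_eq_zero_iff.mp hdeg).1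
  exact h.mem_of_zero

end Expansion

section Normalized

open Polynomial

/-- The normalization conditions (1)–(3) on a fractional ideal `M`, with `F = K(x)`. -/
structure IsNormalized (K : Type*) {D : Type*} [Field K] [Ring D] [Algebra K D] (F : Subring D)
    (x y : D) (M : Set D) : Prop where
  hasExpansion : ∀ m ∈ M, ∃ n t, HasExpansion F y m n t
  exists_aeval_mem : ∃ p : K[X], p ≠ 0 ∧ aeval x p ∈ M
  leading_eq_aeval : ∀ m ∈ M, ∀ n t, HasExpansion F y m n t → t ≠ 0 → ∃ p : K[X], t = aeval x p
  exists_leading_eq_algebraMap :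
    ∃ m ∈ M, ∃ n, ∃ c : K, c ≠ 0 ∧ HasExpansion F y m n (algebraMap K D c)

namespace IsNormalized

variable {K D : Type*} [Field K]

section Ring

variable [Ring D] [Algebra K D] {F : Subring D} {x y : D} {M : Set D}

theorem of_sum_mul_pow
    (h1 : M ⊆ {s | ∃ (n : ℕ) (a : ℕ → D), (∀ i, a i ∈ F) ∧
      s = ∑ i ∈ Finset.range (n + 1), a i * y ^ i})
    (hcap : ∃ p : K[X], p ≠ 0 ∧ aeval x p ∈ M)
    (h2 : ∀ m ∈ M, ∀ (n : ℕ) (a : ℕ → D), (∀ i, a i ∈ F) →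
      m = ∑ i ∈ Finset.range (n + 1), a i * y ^ i → a n ≠ 0 → ∃ p : K[X], a n = aeval x p)
    (h3 : ∃ m ∈ M, ∃ (n : ℕ) (a : ℕ → D), (∀ i, a i ∈ F) ∧
      m = ∑ i ∈ Finset.range (n + 1), a i * y ^ i ∧ ∃ c : K, c ≠ 0 ∧ a n = algebraMap K D c) :
    IsNormalized K F x y M where
  hasExpansion m hm := by
    obtain ⟨n, a, ha, rfl⟩ := h1 hm
    exact ⟨n, a n, a, ha, rfl, rfl⟩
  exists_aeval_mem := hcap
  leading_eq_aeval := by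
    rintro m hm n _ ⟨a, ha, rfl, rfl⟩
    exact h2 _ hm n a ha rfl
  exists_leading_eq_algebraMap := by
    obtain ⟨m, hm, n, a, ha, rfl, c, hc, hac⟩ := h3
    exact ⟨_, hm, n, c, hc, a, ha, rfl, hac⟩

theorem exists_aeval_eq {M' : Set D} (hM : IsNormalized K F x y M) (hM' : IsNormalized K F x y M')
    {q : D} (hqF : q ∈ F) (hq0 : q ≠ 0) (hqM : ∀ m ∈ M, q * m ∈ M') :
    ∃ p : K[X], q = aeval x p := by
  obtain ⟨m, hm, n, c, hc, hexp⟩ := hM.exists_leading_eq_algebraMap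
  have hunit : IsUnit (algebraMap K D c) := (IsUnit.mk0 c hc).map _
  obtain ⟨p, hp⟩ := hM'.leading_eq_aeval _ (hqM m hm) n _ (hexp.mul_left hqF)
    (by rwa [Ne, hunit.mul_left_eq_zero])
  refine ⟨p * C c⁻¹, ?_⟩
  rw [map_mul, aeval_C, ← hp, mul_assoc, ← map_mul, mul_inv_cancel₀ hc, map_one, mul_one]

end Ring

section DivisionRing

variable [DivisionRing D] [Algebra K D] {F : Subfield D} {x y : D} {M : Set D}

theorem exists_hasExpansion_of_mul_mem (hx : Transcendental K x)
    (hxF : ∀ p : K[X], aeval x p ∈ F) (hy : ∀ c ∈ F, c * y - y * c ∈ F) {M' : Set D}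
    (hM : IsNormalized K F.toSubring x y M) (hM' : IsNormalized K F.toSubring x y M')
    {q : D} (hqM : ∀ m ∈ M, q * m ∈ M') : ∃ n t, HasExpansion F.toSubring y q n t := by
  obtain ⟨p, hp, hpM⟩ := hM.exists_aeval_mem
  obtain ⟨n, t, hexp⟩ := hM'.hasExpansion _ (hqM _ hpM)
  have := hexp.mul hy (.of_mem (F.inv_mem (hxF p)))
  rw [mul_assoc, mul_inv_cancel₀ (hx.aeval_ne_zero hp), mul_one] at this
  exact ⟨_, _, this⟩

theorem eq_algebraMap_of_image_eq (hx : Transcendental K x)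
    (hxF : ∀ p : K[X], aeval x p ∈ F) (hy : ∀ c ∈ F, c * y - y * c ∈ F)
    (hindep : ∀ n t, HasExpansion F.toSubring y 0 n t → t = 0) {M' : Set D}
    (hM : IsNormalized K F.toSubring x y M) (hM' : IsNormalized K F.toSubring x y M')
    {q : D} (hq : M' = (q * ·) '' M) : ∃ c : K, c ≠ 0 ∧ q = algebraMap K D c := by
  have hqM : ∀ m ∈ M, q * m ∈ M' := fun m hm => hq ▸ ⟨m, hm, rfl⟩
  have hq0 : q ≠ 0 := by
    rintro rfl
    obtain ⟨p, hp, hpM'⟩ := hM'.exists_aeval_mem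
    obtain ⟨m, -, hm⟩ := hq ▸ hpM'
    exact hx.aeval_ne_zero hp (by simpa using hm.symm)
  have hqM' : ∀ m ∈ M', q⁻¹ * m ∈ M := by
    rw [hq]
    rintro _ ⟨m, hm, rfl⟩
    rwa [← mul_assoc, inv_mul_cancel₀ hq0, one_mul]
  obtain ⟨n, t, hexp⟩ := exists_hasExpansion_of_mul_mem hx hxF hy hM hM' hqM
  obtain ⟨n', t', hexp'⟩ := exists_hasExpansion_of_mul_mem hx hxF hy hM' hM hqM'
  have hqF : q ∈ F := mem_of_hasExpansion_of_mul_eq_one hy hindep hexp hexp' (mul_inv_cancel₀ hq0)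
  obtain ⟨p, rfl⟩ := hM.exists_aeval_eq hM' hqF hq0 hqM
  obtain ⟨r, hr⟩ := hM'.exists_aeval_eq hM (F.inv_mem hqF) (inv_ne_zero hq0) hqM'
  exact hx.exists_eq_algebraMap_of_aeval_mul_aeval_eq_one (by rw [← hr, mul_inv_cancel₀ hq0])

end DivisionRing

end IsNormalized

end Normalized

theorem normalized_fractional_ideal_unique_general
    (Q : Type) [DivisionRing Q] [Algebra ℂ Q]
    (X Y : Q) (hweyl : X * Y - Y * X = 1)
    -- `Cx` is the subfield `ℂ(x) ⊆ Q` of rational functions in `X`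
    (Cx : Set Q)
    (hCx : Cx = {q : Q | ∃ p r : Polynomial ℂ, r ≠ 0 ∧
      q = Polynomial.aeval X p * (Polynomial.aeval X r)⁻¹})
    -- `CxY` is the subring `ℂ(x)[y] ⊆ Q`
    (CxY : Set Q)
    (hCxY : CxY = {q : Q | ∃ (n : ℕ) (a : ℕ → Q), (∀ i, a i ∈ Cx) ∧
      q = ∑ i ∈ Finset.range (n + 1), a i * Y ^ i})
    -- the powers of `Y` are left linearly independent over `ℂ(x)`, so leading
    -- coefficients are well defined
    (hindep : ∀ (n : ℕ) (a : ℕ → Q), (∀ i, a i ∈ Cx) →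
      (∑ i ∈ Finset.range (n + 1), a i * Y ^ i) = 0 → ∀ i ≤ n, a i = 0)
    (M M' : Submodule ℂ Q)
    -- (1) `M, M' ⊆ ℂ(x)[y]` and they meet `ℂ[x]` nontrivially
    (hM1 : (M : Set Q) ⊆ CxY) (hM'1 : (M' : Set Q) ⊆ CxY)
    (hMcap : ∃ p : Polynomial ℂ, p ≠ 0 ∧ Polynomial.aeval X p ∈ M)
    (hM'cap : ∃ p : Polynomial ℂ, p ≠ 0 ∧ Polynomial.aeval X p ∈ M')
    -- (2) all leading coefficients of elements of `M`, `M'` lie in `ℂ[x]`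
    (hM2 : ∀ m ∈ M, ∀ (n : ℕ) (a : ℕ → Q), (∀ i, a i ∈ Cx) →
      m = ∑ i ∈ Finset.range (n + 1), a i * Y ^ i → a n ≠ 0 →
      ∃ p : Polynomial ℂ, a n = Polynomial.aeval X p)
    (hM'2 : ∀ m ∈ M', ∀ (n : ℕ) (a : ℕ → Q), (∀ i, a i ∈ Cx) →
      m = ∑ i ∈ Finset.range (n + 1), a i * Y ^ i → a n ≠ 0 →
      ∃ p : Polynomial ℂ, a n = Polynomial.aeval X p)
    -- (3) `M`, `M'` contain an element with constant nonzero leading coefficient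
    (hM3 : ∃ m ∈ M, ∃ (n : ℕ) (a : ℕ → Q), (∀ i, a i ∈ Cx) ∧
      m = ∑ i ∈ Finset.range (n + 1), a i * Y ^ i ∧
      ∃ c : ℂ, c ≠ 0 ∧ a n = algebraMap ℂ Q c)
    (hM'3 : ∃ m ∈ M', ∃ (n : ℕ) (a : ℕ → Q), (∀ i, a i ∈ Cx) ∧
      m = ∑ i ∈ Finset.range (n + 1), a i * Y ^ i ∧
      ∃ c : ℂ, c ≠ 0 ∧ a n = algebraMap ℂ Q c)
    (q : Q) (hq : M' = Submodule.map (LinearMap.mulLeft ℂ q) M) :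
    (∃ c : ℂ, c ≠ 0 ∧ q = algebraMap ℂ Q c) ∧ M' = M := by
  subst hCx hCxY
  have hX : Transcendental ℂ X := transcendental_of_mul_sub_mul_eq_one hweyl
  let F := ratFuncSubfield X hX
  have hM : IsNormalized ℂ F.toSubring X Y M := .of_sum_mul_pow hM1 hMcap hM2 hM3
  have hM' : IsNormalized ℂ F.toSubring X Y M' := .of_sum_mul_pow hM'1 hM'cap hM'2 hM'3
  obtain ⟨c, hc, rfl⟩ := hM.eq_algebraMap_of_image_eq hX aeval_mem_ratFuncSubfield
    (fun _ => commutator_mem_ratFuncSubfield hweyl)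
    (fun n _ ⟨a, ha, h0, hat⟩ => hat ▸ hindep n a ha h0.symm n le_rfl) hM'
    (by rw [hq, Submodule.map_coe]; rfl)
  have hmul : LinearMap.mulLeft ℂ (algebraMap ℂ Q c) = c • LinearMap.id :=
    LinearMap.ext fun m => by simp [Algebra.smul_def]
  rw [hq, hmul, Submodule.map_smul _ _ c hc, Submodule.map_id]
  exact ⟨⟨c, hc, rfl⟩, rfl⟩

/-- Uniqueness of the normalized fractional-ideal representative `M_x` (Lemma 5.1): inside the
quotient division ring `Q` of the Weyl algebra, if `M` and `M'` are nonzero fractional right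
ideals contained in `ℂ(x)[y]`, each meeting `ℂ[x]` nontrivially, with all leading coefficients
(in `y`) in `ℂ[x]` and each containing an element with nonzero constant leading coefficient,
and if `M' = qM` for some `q ∈ Q`, then `q` is a nonzero constant and `M' = M`. -/
theorem normalized_fractional_ideal_unique
    (Q : Type) [DivisionRing Q] [Algebra ℂ Q]
    (X Y : Q) (hweyl : X * Y - Y * X = 1)
    -- `Cx` is the subfield `ℂ(x) ⊆ Q` of rational functions in `X`
    (Cx : Set Q)
    (hCx : Cx = {q : Q | ∃ p r : Polynomial ℂ, r ≠ 0 ∧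
      q = Polynomial.aeval X p * (Polynomial.aeval X r)⁻¹})
    -- `CxY` is the subring `ℂ(x)[y] ⊆ Q`
    (CxY : Set Q)
    (hCxY : CxY = {q : Q | ∃ (n : ℕ) (a : ℕ → Q), (∀ i, a i ∈ Cx) ∧
      q = ∑ i ∈ Finset.range (n + 1), a i * Y ^ i})
    -- the powers of `Y` are left linearly independent over `ℂ(x)`, so leading
    -- coefficients are well defined
    (hindep : ∀ (n : ℕ) (a : ℕ → Q), (∀ i, a i ∈ Cx) →
      (∑ i ∈ Finset.range (n + 1), a i * Y ^ i) = 0 → ∀ i ≤ n, a i = 0)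
    (M M' : Submodule ℂ Q) (hMne : M ≠ ⊥)
    -- `M`, `M'` are right modules over the Weyl subalgebra generated by `X` and `Y`
    (hMr : ∀ m ∈ M, m * X ∈ M ∧ m * Y ∈ M)
    (hM'r : ∀ m ∈ M', m * X ∈ M' ∧ m * Y ∈ M')
    -- (1) `M, M' ⊆ ℂ(x)[y]` and they meet `ℂ[x]` nontrivially
    (hM1 : (M : Set Q) ⊆ CxY) (hM'1 : (M' : Set Q) ⊆ CxY)
    (hMcap : ∃ p : Polynomial ℂ, p ≠ 0 ∧ Polynomial.aeval X p ∈ M)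
    (hM'cap : ∃ p : Polynomial ℂ, p ≠ 0 ∧ Polynomial.aeval X p ∈ M')
    -- (2) all leading coefficients of elements of `M`, `M'` lie in `ℂ[x]`
    (hM2 : ∀ m ∈ M, ∀ (n : ℕ) (a : ℕ → Q), (∀ i, a i ∈ Cx) →
      m = ∑ i ∈ Finset.range (n + 1), a i * Y ^ i → a n ≠ 0 →
      ∃ p : Polynomial ℂ, a n = Polynomial.aeval X p)
    (hM'2 : ∀ m ∈ M', ∀ (n : ℕ) (a : ℕ → Q), (∀ i, a i ∈ Cx) →
      m = ∑ i ∈ Finset.range (n + 1), a i * Y ^ i → a n ≠ 0 →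
      ∃ p : Polynomial ℂ, a n = Polynomial.aeval X p)
    -- (3) `M`, `M'` contain an element with constant nonzero leading coefficient
    (hM3 : ∃ m ∈ M, ∃ (n : ℕ) (a : ℕ → Q), (∀ i, a i ∈ Cx) ∧
      m = ∑ i ∈ Finset.range (n + 1), a i * Y ^ i ∧
      ∃ c : ℂ, c ≠ 0 ∧ a n = algebraMap ℂ Q c)
    (hM'3 : ∃ m ∈ M', ∃ (n : ℕ) (a : ℕ → Q), (∀ i, a i ∈ Cx) ∧
      m = ∑ i ∈ Finset.range (n + 1), a i * Y ^ i ∧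
      ∃ c : ℂ, c ≠ 0 ∧ a n = algebraMap ℂ Q c)
    (q : Q) (hq : M' = Submodule.map (LinearMap.mulLeft ℂ q) M) :
    (∃ c : ℂ, c ≠ 0 ∧ q = algebraMap ℂ Q c) ∧ M' = M :=
  normalized_fractional_ideal_unique_general Q X Y hweyl Cx hCx CxY hCxY hindep M M' hM1 hM'1 hMcap
    hM'cap hM2 hM'2 hM3 hM'3 q hq
end
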